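/- arXiv:1406.7580 — 7 statements merged into one kernel-verified Lean document; each statement's English description precedes it below -/
import Mathlib

section
/- Let r0 ≥ 0, k > 0 and β ≥ 0 be real constants, and set λ := k − β·e^{k·r0}. Let u : [−r0, ∞) → [0, ∞) be continuous and for t ≥ 0 set U(t) := sup_{θ ∈ [−r0, 0]} u(t + θ). Assume there is A ≥ 0 such that u(s) ≤ A for all s ∈ [−r0, 0], and e^{k t} u(t) ≤ A + β ∫_0^t e^{k s} U(s) ds for all t ≥ 0. Then U(t) ≤ A · e^{k r0} · e^{−λ t} for all t ≥ 0. -/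
open MeasureTheory Real Set

private lemma contU_aux (r0 : ℝ) (hr0 : 0 ≤ r0) (u U : ℝ → ℝ)
    (hu_cont : ContinuousOn u (Set.Ici (-r0)))
    (hU : ∀ t, 0 ≤ t → U t = sSup (u '' Set.Icc (t - r0) t)) :
    ContinuousOn U (Set.Ici (0:ℝ)) := by
  intro t₀ ht₀
  rw [Metric.continuousWithinAt_iff]
  intro ε hε
  set K : Set ℝ := Set.Icc (-r0) (t₀ + 1) with hK
  have hKsub : K ⊆ Set.Ici (-r0) := fun x hx => hx.1
  have huc : UniformContinuousOn u K :=
    isCompact_Icc.uniformContinuousOn_of_continuous (hu_cont.mono hKsub)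
  rw [Metric.uniformContinuousOn_iff] at huc
  obtain ⟨δ, hδ, hδ'⟩ := huc (ε / 2) (by linarith)
  refine ⟨min δ 1, by positivity, ?_⟩
  intro t ht hdist
  have ht₀' : (0:ℝ) ≤ t₀ := ht₀
  have hbdd : ∀ s : ℝ, 0 ≤ s → BddAbove (u '' Set.Icc (s - r0) s) := by
    intro s hs
    exact (isCompact_Icc.image_of_continuousOn
      (hu_cont.mono (fun x hx => le_trans (by linarith) hx.1))).bddAbove
  have hne : ∀ s : ℝ, (u '' Set.Icc (s - r0) s).Nonempty :=
    fun s => ⟨u s, Set.mem_image_of_mem u ⟨by linarith, le_refl s⟩⟩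
  have key : ∀ s s' : ℝ, s ∈ Set.Icc (0:ℝ) (t₀ + 1) → s' ∈ Set.Icc (0:ℝ) (t₀ + 1) →
      dist s s' < δ → U s ≤ U s' + ε / 2 := by
    intro s s' hs hs' hd
    rw [hU s hs.1]
    apply csSup_le (hne s)
    rintro _ ⟨x, hx, rfl⟩
    have hymem : x - s + s' ∈ Set.Icc (s' - r0) s' := ⟨by linarith [hx.1], by linarith [hx.2]⟩
    have hxK : x ∈ K := ⟨by linarith [hx.1, hs.1], by linarith [hx.2, hs.2]⟩
    have hyK : x - s + s' ∈ K := ⟨by linarith [hymem.1, hs'.1], by linarith [hymem.2, hs'.2]⟩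
    have hdxy : dist x (x - s + s') < δ := by
      rw [Real.dist_eq] at hd ⊢
      have h9 : x - (x - s + s') = s - s' := by ring
      rw [h9]; exact hd
    have h1 : u x ≤ u (x - s + s') + ε / 2 := by
      have := hδ' x hxK (x - s + s') hyK hdxy
      rw [Real.dist_eq] at this
      linarith [le_abs_self (u x - u (x - s + s'))]
    have h2 : u (x - s + s') ≤ U s' := by
      rw [hU s' hs'.1]
      exact le_csSup (hbdd s' hs'.1) (Set.mem_image_of_mem u hymem)
    linarith
  rw [Real.dist_eq] at hdist
  have h1 : |t - t₀| < 1 := lt_of_lt_of_le hdist (min_le_right δ 1)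
  have h2 : |t - t₀| < δ := lt_of_lt_of_le hdist (min_le_left δ 1)
  obtain ⟨ha, hb⟩ := abs_lt.1 h1
  have ht1 : t ∈ Set.Icc (0:ℝ) (t₀ + 1) := ⟨ht, by linarith⟩
  have ht2 : t₀ ∈ Set.Icc (0:ℝ) (t₀ + 1) := ⟨ht₀', by linarith⟩
  have k1 := key t t₀ ht1 ht2 (by rw [Real.dist_eq]; exact h2)
  have k2 := key t₀ t ht2 ht1 (by rw [Real.dist_eq, abs_sub_comm]; exact h2)
  rw [Real.dist_eq, abs_lt]
  constructor <;> linarith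

private lemma gronwall_aux (a c : ℝ) (ha : 0 ≤ a) (hc : 0 ≤ c) (g : ℝ → ℝ)
    (hg : ContinuousOn g (Set.Ici (0:ℝ)))
    (hmain : ∀ t, 0 ≤ t → g t ≤ a + c * ∫ s in (0:ℝ)..t, g s) :
    ∀ t, 0 ≤ t → g t ≤ a * Real.exp (c * t) := by
  intro T hT
  set F : ℝ → ℝ := fun t => a + c * ∫ s in (0:ℝ)..t, g s with hF
  set G : ℝ → ℝ := fun t => F t * Real.exp (-c * t) with hG
  have hint : ∀ x : ℝ, 0 ≤ x → IntervalIntegrable g volume 0 x := by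
    intro x hx
    apply ContinuousOn.intervalIntegrable
    rw [uIcc_of_le hx]
    exact hg.mono (fun y hy => hy.1)
  have hFcont : ContinuousOn F (Set.Icc 0 T) := by
    apply continuousOn_const.add (continuousOn_const.mul ?_)
    have h1 : IntegrableOn g (Set.uIcc 0 T) volume := by
      rw [uIcc_of_le hT]
      exact (hg.mono (fun y hy => hy.1)).integrableOn_compact isCompact_Icc
    have := intervalIntegral.continuousOn_primitive_interval h1
    rwa [uIcc_of_le hT] at this
  have hGcont : ContinuousOn G (Set.Icc 0 T) :=
    hFcont.mul (Real.continuous_exp.comp (continuous_const.mul continuous_id)).continuousOn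
  have hderiv : ∀ t ∈ Set.Ioo (0:ℝ) T,
      HasDerivAt G ((c * g t) * Real.exp (-c * t) + F t * (Real.exp (-c * t) * (-c))) t := by
    intro t ht
    have h1 : HasDerivAt (fun x => ∫ s in (0:ℝ)..x, g s) (g t) t := by
      apply intervalIntegral.integral_hasDerivAt_right (hint t ht.1.le)
      · exact ContinuousOn.stronglyMeasurableAtFilter isOpen_Ioi
          (hg.mono Ioi_subset_Ici_self) t ht.1
      · exact hg.continuousAt (Ici_mem_nhds ht.1)
    have h2 : HasDerivAt F (c * g t) t := (h1.const_mul c).const_add a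
    have h3 : HasDerivAt (fun x : ℝ => Real.exp (-c * x)) (Real.exp (-c * t) * (-c)) t := by
      have h4 : HasDerivAt (fun x : ℝ => -c * x) (-c) t := by
        simpa using (hasDerivAt_id t).const_mul (-c)
      exact h4.exp
    exact h2.mul h3
  have hanti : AntitoneOn G (Set.Icc 0 T) := by
    apply antitoneOn_of_deriv_nonpos (convex_Icc 0 T) hGcont
    · intro t ht
      rw [interior_Icc] at ht
      exact (hderiv t ht).differentiableAt.differentiableWithinAt
    · intro t ht
      rw [interior_Icc] at ht
      rw [(hderiv t ht).deriv]
      have hgF : g t ≤ F t := hmain t ht.1.le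
      have hep : (0:ℝ) < Real.exp (-c * t) := Real.exp_pos _
      nlinarith [mul_nonneg (mul_nonneg hc hep.le) (sub_nonneg.2 hgF)]
  have hGT : G T ≤ G 0 := hanti (left_mem_Icc.2 hT) (right_mem_Icc.2 hT) hT
  have hG0 : G 0 = a := by simp [hG, hF]
  have he : Real.exp (-c * T) * Real.exp (c * T) = 1 := by
    rw [← Real.exp_add]; ring_nf; exact Real.exp_zero
  have h5 : F T * Real.exp (-c * T) * Real.exp (c * T) ≤ a * Real.exp (c * T) :=
    mul_le_mul_of_nonneg_right (by rw [← hG0]; exact hGT) (Real.exp_pos _).le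
  rw [mul_assoc, he, mul_one] at h5
  exact le_trans (hmain T hT) h5

/-- Delay-Gronwall inequality (Lemma 2.2 / inequality (c2)):
if `u ≥ 0` on `[-r0, ∞)` satisfies `u ≤ A` on `[-r0,0]` and
`e^{kt} u(t) ≤ A + β ∫_0^t e^{ks} U(s) ds` for `t ≥ 0`, where
`U(t) = sup_{θ ∈ [-r0,0]} u(t+θ)`, then `U(t) ≤ A e^{k r0} e^{-λ t}`
with `λ = k - β e^{k r0}`. -/
theorem delay_gronwall
    (r0 k β A : ℝ) (hr0 : 0 ≤ r0) (hk : 0 < k) (hβ : 0 ≤ β) (hA : 0 ≤ A)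
    (u U : ℝ → ℝ)
    (hu_cont : ContinuousOn u (Set.Ici (-r0)))
    (hu_nonneg : ∀ s ∈ Set.Ici (-r0), 0 ≤ u s)
    (hU : ∀ t, 0 ≤ t → U t = sSup (u '' Set.Icc (t - r0) t))
    (h_init : ∀ s ∈ Set.Icc (-r0) (0 : ℝ), u s ≤ A)
    (h_main : ∀ t, 0 ≤ t →
      Real.exp (k * t) * u t ≤ A + β * ∫ s in (0 : ℝ)..t, Real.exp (k * s) * U s) :
    ∀ t, 0 ≤ t →
      U t ≤ A * Real.exp (k * r0) * Real.exp (-(k - β * Real.exp (k * r0)) * t) := by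
  set g : ℝ → ℝ := fun s => Real.exp (k * s) * U s with hg
  set w : ℝ → ℝ := fun t => A + β * ∫ s in (0:ℝ)..t, g s with hw
  have hUcont : ContinuousOn U (Set.Ici (0:ℝ)) := contU_aux r0 hr0 u U hu_cont hU
  have hgcont : ContinuousOn g (Set.Ici (0:ℝ)) :=
    (Real.continuous_exp.comp (continuous_const.mul continuous_id)).continuousOn.mul hUcont
  have hwindow : ∀ t : ℝ, 0 ≤ t → Set.Icc (t - r0) t ⊆ Set.Ici (-r0) :=
    fun t ht x hx => le_trans (by linarith) hx.1
  have hbdd : ∀ t : ℝ, 0 ≤ t → BddAbove (u '' Set.Icc (t - r0) t) := fun t ht =>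
    (isCompact_Icc.image_of_continuousOn (hu_cont.mono (hwindow t ht))).bddAbove
  have hne : ∀ t : ℝ, (u '' Set.Icc (t - r0) t).Nonempty :=
    fun t => ⟨u t, Set.mem_image_of_mem u ⟨by linarith, le_refl t⟩⟩
  have hUnn : ∀ t : ℝ, 0 ≤ t → 0 ≤ U t := by
    intro t ht
    rw [hU t ht]
    refine le_trans (hu_nonneg t (by simp only [Set.mem_Ici]; linarith)) ?_
    exact le_csSup (hbdd t ht) (Set.mem_image_of_mem u ⟨by linarith, le_refl t⟩)
  have hgnn : ∀ t : ℝ, 0 ≤ t → 0 ≤ g t := fun t ht =>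
    mul_nonneg (Real.exp_pos _).le (hUnn t ht)
  have hint : ∀ x y : ℝ, 0 ≤ x → x ≤ y → IntervalIntegrable g volume x y := by
    intro x y hx hxy
    apply ContinuousOn.intervalIntegrable
    rw [uIcc_of_le hxy]
    exact hgcont.mono (fun z hz => le_trans hx hz.1)
  have hwmono : ∀ x t : ℝ, 0 ≤ x → x ≤ t → w x ≤ w t := by
    intro x t hx hxt
    have hsplit : (∫ s in (0:ℝ)..x, g s) + ∫ s in x..t, g s = ∫ s in (0:ℝ)..t, g s :=
      intervalIntegral.integral_add_adjacent_intervals (hint 0 x le_rfl hx) (hint x t hx hxt)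
    have hpos : 0 ≤ ∫ s in x..t, g s :=
      intervalIntegral.integral_nonneg hxt (fun s hs => hgnn s (le_trans hx hs.1))
    simp only [hw, ← hsplit]
    have hd : β * ((∫ s in (0:ℝ)..x, g s) + ∫ s in x..t, g s)
        = β * (∫ s in (0:ℝ)..x, g s) + β * ∫ s in x..t, g s := by ring
    rw [hd]
    linarith [mul_nonneg hβ hpos]
  have hw0 : w 0 = A := by simp [hw]
  have hwnn : ∀ t : ℝ, 0 ≤ t → 0 ≤ w t := fun t ht => by
    have := hwmono 0 t le_rfl ht; rw [hw0] at this; linarith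
  have step : ∀ t : ℝ, 0 ≤ t → g t ≤ Real.exp (k * r0) * w t := by
    intro t ht
    have hUb : U t ≤ Real.exp (k * r0 - k * t) * w t := by
      rw [hU t ht]
      apply csSup_le (hne t)
      rintro _ ⟨x, hx, rfl⟩
      by_cases hx0 : 0 ≤ x
      · have h1 : Real.exp (k * x) * u x ≤ w x := h_main x hx0
        have h2 : w x ≤ w t := hwmono x t hx0 hx.2
        have h13 : Real.exp (k * x) * u x ≤ w t := le_trans h1 h2
        have hee : Real.exp (-(k * x)) * Real.exp (k * x) = 1 := by
          rw [← Real.exp_add]; simp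
        have h3 : u x ≤ Real.exp (-(k * x)) * w t := by
          have h6 := mul_le_mul_of_nonneg_left h13 (Real.exp_pos (-(k * x))).le
          rwa [← mul_assoc, hee, one_mul] at h6
        refine le_trans h3 (mul_le_mul_of_nonneg_right ?_ (hwnn t ht))
        apply Real.exp_le_exp.2
        nlinarith [hx.1]
      · push_neg at hx0
        have h1 : u x ≤ A := h_init x ⟨by linarith [hx.1], hx0.le⟩
        have h2 : A ≤ w t := by rw [← hw0]; exact hwmono 0 t le_rfl ht
        have h3 : (1:ℝ) ≤ Real.exp (k * r0 - k * t) :=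
          Real.one_le_exp (by nlinarith [hx.1])
        nlinarith [mul_nonneg (sub_nonneg.2 h3) (hwnn t ht)]
    calc g t = Real.exp (k * t) * U t := rfl
      _ ≤ Real.exp (k * t) * (Real.exp (k * r0 - k * t) * w t) :=
          mul_le_mul_of_nonneg_left hUb (Real.exp_pos _).le
      _ = Real.exp (k * r0) * w t := by
          rw [← mul_assoc, ← Real.exp_add]; ring_nf
  have hmain2 : ∀ t, 0 ≤ t → g t ≤ A * Real.exp (k * r0)
      + (β * Real.exp (k * r0)) * ∫ s in (0:ℝ)..t, g s := by
    intro t ht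
    calc g t ≤ Real.exp (k * r0) * w t := step t ht
      _ = A * Real.exp (k * r0) + (β * Real.exp (k * r0)) * ∫ s in (0:ℝ)..t, g s := by
          simp only [hw]; ring
  have hgron := gronwall_aux (A * Real.exp (k * r0)) (β * Real.exp (k * r0))
    (mul_nonneg hA (Real.exp_pos _).le) (mul_nonneg hβ (Real.exp_pos _).le) g hgcont hmain2
  intro t ht
  have h1 := hgron t ht
  have he : Real.exp (β * Real.exp (k * r0) * t)
      = Real.exp (-(k - β * Real.exp (k * r0)) * t) * Real.exp (k * t) := by
    rw [← Real.exp_add]; ring_nf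
  rw [he, ← mul_assoc] at h1
  have h2 : Real.exp (k * t) * U t ≤
      (A * Real.exp (k * r0) * Real.exp (-(k - β * Real.exp (k * r0)) * t)) * Real.exp (k * t) := h1
  calc U t = Real.exp (k * t) * U t / Real.exp (k * t) := by field_simp
    _ ≤ _ := by
        rw [div_le_iff₀ (Real.exp_pos _)]
        exact h2
end

section
/- Let r0 ≥ 0, k > 0, β ≥ 0 and c ≥ 0 be real constants with λ := k − β·e^{k·r0} > 0. Let u : [−r0, ∞) → [0, ∞) be continuous and for t ≥ 0 set U(t) := sup_{θ ∈ [−r0, 0]} u(t + θ). Assume there is A ≥ 0 such that u(s) ≤ A for all s ∈ [−r0, 0], and e^{k t} u(t) ≤ A + ∫_0^t e^{k s} (c + β U(s)) ds for all t ≥ 0. Then U(t) ≤ e^{k r0} (A e^{−λ t} + c/λ) for all t ≥ 0; in particular sup_{t ≥ 0} U(t) ≤ e^{k r0}(A + c/λ). -/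
open MeasureTheory Real Set

private lemma exp_integ (a t : ℝ) :
    ∫ s in (0:ℝ)..t, a * Real.exp (a * s) = Real.exp (a * t) - 1 := by
  have h : ∀ s ∈ Set.uIcc (0:ℝ) t,
      HasDerivAt (fun x => Real.exp (a * x)) (a * Real.exp (a * s)) s := by
    intro s _
    simpa [mul_comm] using ((hasDerivAt_id s).const_mul a).exp
  have hcont : Continuous fun s => a * Real.exp (a * s) :=
    continuous_const.mul (Real.continuous_exp.comp (continuous_const.mul continuous_id))
  have := intervalIntegral.integral_eq_sub_of_hasDerivAt h (hcont.intervalIntegrable 0 t)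
  simpa using this

private lemma seg_bound (r0 k lam c A' : ℝ) (hr0 : 0 ≤ r0) (hlam : 0 < lam)
    (hlk : lam ≤ k) (hc : 0 ≤ c) (hA' : 0 ≤ A')
    (u : ℝ → ℝ) (t : ℝ) (ht : 0 ≤ t)
    (hinit : ∀ s ∈ Set.Icc (-r0) (0:ℝ), u s ≤ A')
    (hpos : ∀ s, 0 ≤ s → s ≤ t → u s ≤ c / lam + A' * Real.exp (-lam * s)) :
    ∀ x ∈ Set.Icc (t - r0) t,
      u x ≤ Real.exp (k * r0) * (A' * Real.exp (-lam * t) + c / lam) := by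
  intro x hx
  obtain ⟨hx1, hx2⟩ := hx
  have hclam : 0 ≤ c / lam := div_nonneg hc hlam.le
  have hE : (0:ℝ) < Real.exp (k * r0) := Real.exp_pos _
  by_cases hx0 : x < 0
  · have h1 : u x ≤ A' := hinit x ⟨by linarith, hx0.le⟩
    have htr : t ≤ r0 := by linarith
    have h2 : (1:ℝ) ≤ Real.exp (k * r0) * Real.exp (-lam * t) := by
      rw [← Real.exp_add, ← Real.exp_zero]
      apply Real.exp_le_exp.2
      nlinarith
    nlinarith
  · push_neg at hx0
    have h1 := hpos x hx0 hx2
    have h2 : Real.exp (-lam * x) ≤ Real.exp (k * r0) * Real.exp (-lam * t) := by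
      rw [← Real.exp_add]
      apply Real.exp_le_exp.2
      nlinarith
    have h3 : (1:ℝ) ≤ Real.exp (k * r0) := by
      rw [← Real.exp_zero]
      exact Real.exp_le_exp.2 (by nlinarith)
    nlinarith

/-- Delay-Gronwall inequality with constant forcing (used in Lemmas 2.1 and 2.4):
with `λ = k - β e^{k r0} > 0`, if `u ≥ 0` on `[-r0, ∞)` satisfies `u ≤ A` on `[-r0,0]`
and `e^{kt} u(t) ≤ A + ∫_0^t e^{ks} (c + β U(s)) ds` for `t ≥ 0`, where
`U(t) = sup_{θ ∈ [-r0,0]} u(t+θ)`, then `U(t) ≤ e^{k r0} (A e^{-λ t} + c/λ)`;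
in particular `U(t) ≤ e^{k r0} (A + c/λ)` for all `t ≥ 0`. -/
theorem delay_gronwall_forced
    (r0 k β c A : ℝ) (hr0 : 0 ≤ r0) (hk : 0 < k) (hβ : 0 ≤ β) (hc : 0 ≤ c) (hA : 0 ≤ A)
    (hlam : 0 < k - β * Real.exp (k * r0))
    (u U : ℝ → ℝ)
    (hu_cont : ContinuousOn u (Set.Ici (-r0)))
    (hu_nonneg : ∀ s ∈ Set.Ici (-r0), 0 ≤ u s)
    (hU : ∀ t, 0 ≤ t → U t = sSup (u '' Set.Icc (t - r0) t))
    (h_init : ∀ s ∈ Set.Icc (-r0) (0 : ℝ), u s ≤ A)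
    (h_main : ∀ t, 0 ≤ t →
      Real.exp (k * t) * u t ≤ A + ∫ s in (0 : ℝ)..t, Real.exp (k * s) * (c + β * U s)) :
    (∀ t, 0 ≤ t →
      U t ≤ Real.exp (k * r0) *
        (A * Real.exp (-(k - β * Real.exp (k * r0)) * t) + c / (k - β * Real.exp (k * r0)))) ∧
    (∀ t, 0 ≤ t →
      U t ≤ Real.exp (k * r0) * (A + c / (k - β * Real.exp (k * r0)))) := by
  set lam := k - β * Real.exp (k * r0) with hlamdef
  have hβe : β * Real.exp (k * r0) = k - lam := by rw [hlamdef]; ring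
  have hE1 : (1:ℝ) ≤ Real.exp (k * r0) := by
    rw [← Real.exp_zero]
    exact Real.exp_le_exp.2 (by positivity)
  have hlk : lam ≤ k := by nlinarith [mul_nonneg hβ (Real.exp_pos (k*r0)).le]
  have hclam : 0 ≤ c / lam := div_nonneg hc hlam.le
  have hr0' : -r0 ≤ (0:ℝ) := by linarith
  -- key iterate
  have key : ∀ ε, 0 < ε → ∀ t, 0 ≤ t → u t ≤ c / lam + (A + ε) * Real.exp (-lam * t) := by
    intro ε hε
    by_contra hcon
    push_neg at hcon
    obtain ⟨t1, ht1, hbad⟩ := hcon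
    set g : ℝ → ℝ := fun s => c / lam + (A + ε) * Real.exp (-lam * s) with hg
    have hgcont : Continuous g := by
      apply continuous_const.add
      exact continuous_const.mul (Real.continuous_exp.comp (continuous_const.mul continuous_id))
    set F : Set ℝ := {s | 0 ≤ s ∧ g s ≤ u s} with hF
    have hFne : F.Nonempty := ⟨t1, ht1, hbad.le⟩
    have hFbdd : BddBelow F := ⟨0, fun x hx => hx.1⟩
    have hucont0 : ContinuousOn (fun s => u s - g s) (Set.Ici (0:ℝ)) :=
      (hu_cont.mono (Set.Ici_subset_Ici.2 hr0')).sub hgcont.continuousOn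
    have hFeq : F = Set.Ici (0:ℝ) ∩ (fun s => u s - g s) ⁻¹' Set.Ici (0:ℝ) := by
      ext s
      simp only [hF, Set.mem_setOf_eq, Set.mem_inter_iff, Set.mem_Ici, Set.mem_preimage]
      constructor
      · rintro ⟨h1, h2⟩; exact ⟨h1, by linarith⟩
      · rintro ⟨h1, h2⟩; exact ⟨h1, by linarith⟩
    have hFclosed : IsClosed F := by
      rw [hFeq]
      exact hucont0.preimage_isClosed_of_isClosed isClosed_Ici isClosed_Ici
    set t0 := sInf F with ht0def
    have ht0F : t0 ∈ F := hFclosed.csInf_mem hFne hFbdd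
    have ht0nn : 0 ≤ t0 := ht0F.1
    have hu0 : u 0 ≤ A := h_init 0 ⟨hr0', le_refl 0⟩
    have hg0 : g 0 = c / lam + (A + ε) := by simp [hg]
    have ht0pos : 0 < t0 := by
      rcases ht0nn.lt_or_eq with h | h
      · exact h
      · exfalso
        have := ht0F.2
        rw [← h, hg0] at this
        linarith
    have hlt : ∀ s, 0 ≤ s → s < t0 → u s < g s := by
      intro s hs0 hst
      by_contra hcontra
      push_neg at hcontra
      have : s ∈ F := ⟨hs0, hcontra⟩
      have := csInf_le hFbdd this
      linarith
    -- u t0 ≤ g t0 by continuity from the left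
    have hseg0 : ∀ s, 0 ≤ s → s ≤ t0 → u s ≤ g s := by
      have hle_t0 : u t0 ≤ g t0 := by
        have hne : t0 ∈ closure (Set.Ico (0:ℝ) t0) := by
          rw [closure_Ico ht0pos.ne]
          exact ⟨ht0nn, le_refl _⟩
        have hnb : (nhdsWithin t0 (Set.Ico (0:ℝ) t0)).NeBot :=
          mem_closure_iff_nhdsWithin_neBot.1 hne
        have hcw : ContinuousWithinAt (fun s => u s - g s) (Set.Ico (0:ℝ) t0) t0 :=
          ((hucont0 t0 ht0nn).mono (Set.Ico_subset_Ici_self))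
        have hev : ∀ᶠ x in nhdsWithin t0 (Set.Ico (0:ℝ) t0), u x - g x ≤ 0 := by
          filter_upwards [self_mem_nhdsWithin] with x hx
          have := hlt x hx.1 hx.2
          linarith
        have := le_of_tendsto hcw.tendsto hev
        linarith
      intro s hs0 hst
      rcases hst.lt_or_eq with h | h
      · exact (hlt s hs0 h).le
      · rw [h]; exact hle_t0
    -- bound on U on [0, t0]
    have hUb : ∀ s, 0 ≤ s → s ≤ t0 →
        U s ≤ Real.exp (k * r0) * ((A + ε) * Real.exp (-lam * s) + c / lam) := by
      intro s hs0 hst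
      rw [hU s hs0]
      apply csSup_le (((Set.nonempty_Icc.2 (by linarith)).image u))
      rintro y ⟨x, hx, rfl⟩
      refine seg_bound r0 k lam c (A + ε) hr0 hlam hlk hc (by linarith) u s hs0
        (fun z hz => (h_init z hz).trans (by linarith)) ?_ x hx
      intro z hz0 hzs
      exact hseg0 z hz0 (hzs.trans hst)
    have hUnn : ∀ s, 0 ≤ s → s ≤ t0 → 0 ≤ U s := by
      intro s hs0 hst
      have hmem : u s ∈ u '' Set.Icc (s - r0) s :=
        ⟨s, ⟨by linarith, le_refl _⟩, rfl⟩
      have hbdd : BddAbove (u '' Set.Icc (s - r0) s) := by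
        refine ⟨Real.exp (k * r0) * ((A + ε) * Real.exp (-lam * s) + c / lam), ?_⟩
        rintro y ⟨x, hx, rfl⟩
        refine seg_bound r0 k lam c (A + ε) hr0 hlam hlk hc (by linarith) u s hs0
          (fun z hz => (h_init z hz).trans (by linarith)) ?_ x hx
        intro z hz0 hzs
        exact hseg0 z hz0 (hzs.trans hst)
      have := le_csSup hbdd hmem
      have h0 : 0 ≤ u s := hu_nonneg s (by simp only [Set.mem_Ici]; linarith)
      rw [hU s hs0]
      linarith
    -- the comparison integrand
    set h : ℝ → ℝ := fun s =>
      (c / lam) * (k * Real.exp (k * s)) + (A + ε) * ((k - lam) * Real.exp ((k - lam) * s))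
      with hhdef
    have hhcont : Continuous h := by
      apply Continuous.add
      · exact continuous_const.mul
          (continuous_const.mul (Real.continuous_exp.comp (continuous_const.mul continuous_id)))
      · exact continuous_const.mul
          (continuous_const.mul (Real.continuous_exp.comp (continuous_const.mul continuous_id)))
    have hid : ∀ s, Real.exp (k * s) *
        (c + β * (Real.exp (k * r0) * ((A + ε) * Real.exp (-lam * s) + c / lam))) = h s := by
      intro s
      have e1 : Real.exp ((k - lam) * s) = Real.exp (k * s) * Real.exp (-lam * s) := by
        rw [← Real.exp_add]; ring_nf
      rw [hhdef]
      simp only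
      rw [e1, ← mul_assoc, hβe]
      field_simp
      ring
    -- integral comparison
    have hint : (∫ s in (0:ℝ)..t0, Real.exp (k * s) * (c + β * U s)) ≤
        ∫ s in (0:ℝ)..t0, h s := by
      rw [intervalIntegral.integral_of_le ht0nn, intervalIntegral.integral_of_le ht0nn]
      apply integral_mono_of_nonneg
      · filter_upwards [ae_restrict_mem measurableSet_Ioc] with s hs
        have h1 : 0 ≤ U s := hUnn s hs.1.le hs.2
        have h2 : (0:ℝ) ≤ Real.exp (k * s) := (Real.exp_pos _).le
        have : 0 ≤ c + β * U s := by positivity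
        positivity
      · exact hhcont.integrableOn_Ioc
      · filter_upwards [ae_restrict_mem measurableSet_Ioc] with s hs
        have h1 := hUb s hs.1.le hs.2
        calc Real.exp (k * s) * (c + β * U s)
            ≤ Real.exp (k * s) *
              (c + β * (Real.exp (k * r0) * ((A + ε) * Real.exp (-lam * s) + c / lam))) := by
              have h2 : (0:ℝ) ≤ Real.exp (k * s) := (Real.exp_pos _).le
              have h3 : β * U s ≤ β *
                  (Real.exp (k * r0) * ((A + ε) * Real.exp (-lam * s) + c / lam)) :=
                mul_le_mul_of_nonneg_left h1 hβ
              nlinarith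
          _ = h s := hid s
    -- exact value of the comparison integral
    have hval : (∫ s in (0:ℝ)..t0, h s) =
        (c / lam) * (Real.exp (k * t0) - 1) + (A + ε) * (Real.exp ((k - lam) * t0) - 1) := by
      have i1 : IntervalIntegrable (fun s => (c / lam) * (k * Real.exp (k * s))) volume 0 t0 :=
        (continuous_const.mul
          (continuous_const.mul (Real.continuous_exp.comp (continuous_const.mul continuous_id)))).intervalIntegrable 0 t0
      have i2 : IntervalIntegrable
          (fun s => (A + ε) * ((k - lam) * Real.exp ((k - lam) * s))) volume 0 t0 :=
        (continuous_const.mul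
          (continuous_const.mul (Real.continuous_exp.comp (continuous_const.mul continuous_id)))).intervalIntegrable 0 t0
      rw [hhdef]
      rw [intervalIntegral.integral_add i1 i2, intervalIntegral.integral_const_mul, exp_integ,
        intervalIntegral.integral_const_mul, exp_integ]
    have hmain := h_main t0 ht0nn
    have hfinal : Real.exp (k * t0) * u t0 ≤
        A + ((c / lam) * (Real.exp (k * t0) - 1) + (A + ε) * (Real.exp ((k - lam) * t0) - 1)) := by
      rw [← hval]
      linarith
    -- contradiction
    have hEE : Real.exp ((k - lam) * t0) = Real.exp (k * t0) * Real.exp (-lam * t0) := by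
      rw [← Real.exp_add]; ring_nf
    have hgt0 : g t0 ≤ u t0 := ht0F.2
    have hEkpos : (0:ℝ) < Real.exp (k * t0) := Real.exp_pos _
    have hlt' : Real.exp (k * t0) * u t0 < Real.exp (k * t0) * g t0 := by
      have hexpand : Real.exp (k * t0) * g t0 =
          (c / lam) * Real.exp (k * t0) + (A + ε) * Real.exp ((k - lam) * t0) := by
        rw [hg, hEE]; ring
      rw [hexpand]
      nlinarith
    have : u t0 < g t0 := lt_of_mul_lt_mul_left hlt' hEkpos.le
    linarith
  -- limit ε → 0
  have key0 : ∀ t, 0 ≤ t → u t ≤ c / lam + A * Real.exp (-lam * t) := by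
    intro t ht
    apply le_of_forall_pos_le_add
    intro ε hε
    have h1 := key ε hε t ht
    have h2 : Real.exp (-lam * t) ≤ 1 := by
      rw [← Real.exp_zero]
      apply Real.exp_le_exp.2
      nlinarith
    nlinarith [Real.exp_pos (-lam * t)]
  have first : ∀ t, 0 ≤ t →
      U t ≤ Real.exp (k * r0) * (A * Real.exp (-lam * t) + c / lam) := by
    intro t ht
    rw [hU t ht]
    apply csSup_le ((Set.nonempty_Icc.2 (by linarith)).image u)
    rintro y ⟨x, hx, rfl⟩
    exact seg_bound r0 k lam c A hr0 hlam hlk hc hA u t ht h_init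
      (fun z hz0 _ => key0 z hz0) x hx
  constructor
  · exact first
  · intro t ht
    have h1 := first t ht
    have h2 : Real.exp (-lam * t) ≤ 1 := by
      rw [← Real.exp_zero]
      apply Real.exp_le_exp.2
      nlinarith
    have h3 : A * Real.exp (-lam * t) + c / lam ≤ A + c / lam := by nlinarith
    have h4 : (0:ℝ) < Real.exp (k * r0) := Real.exp_pos _
    nlinarith
end

section
/- Let k ≠ 0 be a real number, t > 0, and u0 ≥ 0. Define g : [0, t] → ℝ by g(s) := 2k·u0·e^{k s} / (e^{2kt} − 1). If u : [0, t] → ℝ is differentiable with u(0) = u0 and u′(s) ≤ −k·u(s) − g(s) for all s ∈ [0, t], then u(s) ≤ u0 · (e^{2kt − ks} − e^{ks}) / (e^{2kt} − 1) for all s ∈ [0, t]; in particular u(t) ≤ 0. -/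
open Real Set

/-!
Put `w s := u0 (e^{2kt - ks} - e^{ks}) / (e^{2kt} - 1)`. This `w` solves `w' = -k w - g` with
`w 0 = u0` and `w t = 0`, so `u - w` satisfies `(u - w)' ≤ -k (u - w)` and vanishes at `0`.
The integrating factor makes `e^{ks} (u - w)(s)` antitone, hence `u ≤ w` on `[0, t]`.
-/

theorem antitoneOn_exp_mul_of_hasDerivAt_le_neg_mul {D : Set ℝ} (hD : Convex ℝ D)
    {k : ℝ} {f f' : ℝ → ℝ} (hf : ∀ s ∈ D, HasDerivAt f (f' s) s)
    (hle : ∀ s ∈ D, f' s ≤ -k * f s) :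
    AntitoneOn (fun s => exp (k * s) * f s) D := by
  have hderiv : ∀ s ∈ D, HasDerivAt (fun s => exp (k * s) * f s)
      (exp (k * s) * (f' s + k * f s)) s := fun s hs => by
    have hexp : HasDerivAt (fun s => exp (k * s)) (exp (k * s) * k) s := by
      simpa using ((hasDerivAt_id s).const_mul k).exp
    exact (hexp.mul (hf s hs)).congr_deriv (by ring)
  refine antitoneOn_of_deriv_nonpos hD
    (fun s hs => (hderiv s hs).continuousAt.continuousWithinAt)
    (fun s hs => (hderiv s (interior_subset hs)).differentiableAt.differentiableWithinAt)
    (fun s hs => ?_)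
  rw [(hderiv s (interior_subset hs)).deriv]
  exact mul_nonpos_of_nonneg_of_nonpos (exp_pos _).le
    (by linarith [hle s (interior_subset hs)])

theorem nonpos_of_hasDerivAt_le_neg_mul {a b k : ℝ} {f f' : ℝ → ℝ}
    (hf : ∀ s ∈ Icc a b, HasDerivAt f (f' s) s) (hle : ∀ s ∈ Icc a b, f' s ≤ -k * f s)
    (ha : f a ≤ 0) : ∀ s ∈ Icc a b, f s ≤ 0 := fun s hs => by
  have hanti := antitoneOn_exp_mul_of_hasDerivAt_le_neg_mul (convex_Icc a b) hf hle
    (left_mem_Icc.mpr (hs.1.trans hs.2)) hs hs.1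
  have : exp (k * s) * f s ≤ 0 :=
    hanti.trans (mul_nonpos_of_nonneg_of_nonpos (exp_pos _).le ha)
  exact nonpos_of_mul_nonpos_right this (exp_pos _)

noncomputable def couplingBarrier (k t u0 s : ℝ) : ℝ :=
  u0 * (exp (2 * k * t - k * s) - exp (k * s)) / (exp (2 * k * t) - 1)

theorem hasDerivAt_couplingBarrier (k t u0 s : ℝ) :
    HasDerivAt (couplingBarrier k t u0)
      (-k * couplingBarrier k t u0 s - 2 * k * u0 * exp (k * s) / (exp (2 * k * t) - 1)) s := by
  have hdown :
      HasDerivAt (fun s => exp (2 * k * t - k * s)) (exp (2 * k * t - k * s) * -k) s := by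
    simpa using (((hasDerivAt_id s).const_mul k).const_sub (2 * k * t)).exp
  have hup : HasDerivAt (fun s => exp (k * s)) (exp (k * s) * k) s := by
    simpa using ((hasDerivAt_id s).const_mul k).exp
  refine (((hdown.sub hup).const_mul u0).div_const (exp (2 * k * t) - 1)).congr_deriv ?_
  unfold couplingBarrier
  ring

theorem couplingBarrier_zero {k t : ℝ} (hk : k ≠ 0) (ht : 0 < t) (u0 : ℝ) :
    couplingBarrier k t u0 0 = u0 := by
  have hden : exp (2 * k * t) - 1 ≠ 0 :=
    sub_ne_zero.mpr (mt (exp_eq_one_iff _).mp (by positivity))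
  simp [couplingBarrier, hden]

theorem couplingBarrier_self (k t u0 : ℝ) : couplingBarrier k t u0 t = 0 := by
  simp [couplingBarrier, show 2 * k * t - k * t = k * t by ring]

theorem coupling_ode_comparison_general
    (k t u0 : ℝ) (hk : k ≠ 0) (ht : 0 < t)
    (u u' : ℝ → ℝ)
    (hderiv : ∀ s ∈ Set.Icc (0 : ℝ) t, HasDerivAt u (u' s) s)
    (h0 : u 0 = u0)
    (hineq : ∀ s ∈ Set.Icc (0 : ℝ) t,
      u' s ≤ -k * u s - 2 * k * u0 * Real.exp (k * s) / (Real.exp (2 * k * t) - 1)) :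
    (∀ s ∈ Set.Icc (0 : ℝ) t,
      u s ≤ u0 * (Real.exp (2 * k * t - k * s) - Real.exp (k * s)) /
        (Real.exp (2 * k * t) - 1)) ∧ u t ≤ 0 := by
  set w := couplingBarrier k t u0
  have hle : ∀ s ∈ Icc 0 t, u s ≤ w s := by
    have hdiff := nonpos_of_hasDerivAt_le_neg_mul (k := k) (f := fun s => u s - w s)
      (fun s hs => (hderiv s hs).sub (hasDerivAt_couplingBarrier k t u0 s))
      (fun s hs => by linarith [hineq s hs])
      (by simp [h0, w, couplingBarrier_zero hk ht])
    exact fun s hs => sub_nonpos.mp (hdiff s hs)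
  exact ⟨hle, (hle t (right_mem_Icc.mpr ht.le)).trans_eq (couplingBarrier_self k t u0)⟩

/-- ODE comparison (inequality (CD3)) used in the proof of the Harnack inequality
(Lemma 2.3): with `g(s) = 2 k u0 e^{k s} / (e^{2kt} - 1)`, any differentiable `u`
with `u(0) = u0` and `u' ≤ -k u - g` on `[0,t]` satisfies
`u(s) ≤ u0 (e^{2kt - ks} - e^{ks}) / (e^{2kt} - 1)`; in particular `u(t) ≤ 0`. -/
theorem coupling_ode_comparison
    (k t u0 : ℝ) (hk : k ≠ 0) (ht : 0 < t) (hu0 : 0 ≤ u0)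
    (u u' : ℝ → ℝ)
    (hderiv : ∀ s ∈ Set.Icc (0 : ℝ) t, HasDerivAt u (u' s) s)
    (h0 : u 0 = u0)
    (hineq : ∀ s ∈ Set.Icc (0 : ℝ) t,
      u' s ≤ -k * u s - 2 * k * u0 * Real.exp (k * s) / (Real.exp (2 * k * t) - 1)) :
    (∀ s ∈ Set.Icc (0 : ℝ) t,
      u s ≤ u0 * (Real.exp (2 * k * t - k * s) - Real.exp (k * s)) /
        (Real.exp (2 * k * t) - 1)) ∧ u t ≤ 0 :=
  coupling_ode_comparison_general k t u0 hk ht u u' hderiv h0 hineq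
end

section
/- Let E be a real normed vector space equipped with its Borel σ-algebra, let κ be a Markov kernel from E to E, and let μ be a probability measure on E that is invariant for κ (i.e. the composition of μ with κ is μ: for every bounded measurable f, ∫_E (∫_E f dκ(x)) μ(dx) = ∫_E f dμ). Assume the Harnack inequality: there is c ≥ 0 such that for every bounded measurable f ≥ 0 and all x, y ∈ E, (∫ f dκ(x))² ≤ (∫ f² dκ(y)) · e^{c‖x − y‖²}. Let r > 0 satisfy μ({x : ‖x‖ < r}) ≥ 1/2. Then for every bounded measurable f ≥ 0 with ∫ f² dμ ≤ 1 and every x ∈ E, (∫ f dκ(x))² ≤ 2 e^{c(‖x‖ + r)²}. -/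
open MeasureTheory ProbabilityTheory Real

/-!
Integrating the Harnack inequality in `y` against `μ` over the ball `‖y‖ < r`, which has mass at
least `1/2`, bounds `(P f x)² / 2` by `e^{c (‖x‖ + r)²} ∫ P(f²) dμ`, and by invariance
`∫ P(f²) dμ = ∫ f² dμ ≤ 1`.
-/

theorem ProbabilityTheory.Kernel.integrable_integral_of_norm_le {α β F : Type*}
    [MeasurableSpace α] [MeasurableSpace β] [NormedAddCommGroup F] [NormedSpace ℝ F]
    {κ : Kernel α β} [IsMarkovKernel κ] {μ : Measure α} [IsFiniteMeasure μ]
    {h : β → F} (hm : StronglyMeasurable h) {C : ℝ} (hC : ∀ z, ‖h z‖ ≤ C) :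
    Integrable (fun y => ∫ z, h z ∂κ y) μ :=
  .of_bound hm.integral_kernel.aestronglyMeasurable C <| ae_of_all _ fun y => by
    simpa using norm_integral_le_of_norm_le_const (μ := κ y) (ae_of_all _ hC)

theorem MeasureTheory.mul_measureReal_le_integral {α : Type*} [MeasurableSpace α]
    {μ : Measure α} [IsFiniteMeasure μ] {s : Set α} (hs : MeasurableSet s) {g : α → ℝ}
    (hg0 : 0 ≤ᵐ[μ] g) (hg : Integrable g μ) {a : ℝ} (ha : ∀ x ∈ s, a ≤ g x) :
    a * μ.real s ≤ ∫ x, g x ∂μ :=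
  (setIntegral_ge_of_const_le_real hs (measure_ne_top μ s) ha hg.integrableOn).trans
    (setIntegral_le_integral hg hg0)

theorem norm_sub_sq_le_of_norm_lt {E : Type*} [SeminormedAddCommGroup E] {x y : E} {r : ℝ}
    (hy : ‖y‖ < r) : ‖x - y‖ ^ 2 ≤ (‖x‖ + r) ^ 2 :=
  pow_le_pow_left₀ (norm_nonneg _) ((norm_sub_le x y).trans (by linarith)) 2

theorem harnack_pointwise_bound_general
    {E : Type*} [NormedAddCommGroup E]
    [MeasurableSpace E] [BorelSpace E]
    (κ : ProbabilityTheory.Kernel E E) [ProbabilityTheory.IsMarkovKernel κ]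
    (μ : MeasureTheory.Measure E) [MeasureTheory.IsProbabilityMeasure μ]
    (hinv : ∀ f : E → ℝ, Measurable f → (∃ C, ∀ x, |f x| ≤ C) →
      ∫ x, (∫ y, f y ∂(κ x)) ∂μ = ∫ y, f y ∂μ)
    (c : ℝ) (hc : 0 ≤ c)
    (harnack : ∀ f : E → ℝ, Measurable f → (∃ C, ∀ x, |f x| ≤ C) → (∀ x, 0 ≤ f x) →
      ∀ x y : E, (∫ z, f z ∂(κ x)) ^ 2 ≤
        (∫ z, (f z) ^ 2 ∂(κ y)) * Real.exp (c * ‖x - y‖ ^ 2))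
    (r : ℝ) (hμr : (1 : ENNReal) / 2 ≤ μ {x : E | ‖x‖ < r}) :
    ∀ f : E → ℝ, Measurable f → (∃ C, ∀ x, |f x| ≤ C) → (∀ x, 0 ≤ f x) →
      (∫ z, (f z) ^ 2 ∂μ) ≤ 1 →
      ∀ x : E, (∫ z, f z ∂(κ x)) ^ 2 ≤ 2 * Real.exp (c * (‖x‖ + r) ^ 2) := by
  intro f hfm ⟨C, hfC⟩ hf0 hfL2 x
  set K := Real.exp (c * (‖x‖ + r) ^ 2)
  set g := fun y => ∫ z, (f z) ^ 2 ∂(κ y)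
  have hsq_le : ∀ z, |f z ^ 2| ≤ C ^ 2 := fun z => by
    rw [abs_pow]; exact pow_le_pow_left₀ (abs_nonneg _) (hfC z) 2
  have hg0 : 0 ≤ g := fun _ => integral_nonneg fun _ => sq_nonneg _
  have hg : Integrable g μ :=
    Kernel.integrable_integral_of_norm_le (hfm.pow_const 2).stronglyMeasurable hsq_le
  have hgμ : ∫ y, g y ∂μ ≤ 1 := (hinv _ (hfm.pow_const 2) ⟨_, hsq_le⟩).trans_le hfL2
  have hball : ∀ y ∈ {y : E | ‖y‖ < r}, (∫ z, f z ∂(κ x)) ^ 2 ≤ g y * K := fun y hy =>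
    (harnack f hfm ⟨C, hfC⟩ hf0 x y).trans <| mul_le_mul_of_nonneg_left
      (exp_le_exp.mpr (mul_le_mul_of_nonneg_left (norm_sub_sq_le_of_norm_lt hy) hc)) (hg0 y)
  have hhalf : 1 / 2 ≤ μ.real {y : E | ‖y‖ < r} := by
    simpa [measureReal_def, ENNReal.toReal_div] using ENNReal.toReal_mono (measure_ne_top μ _) hμr
  have hmass := mul_measureReal_le_integral (measurableSet_lt measurable_norm measurable_const)
    (ae_of_all _ fun y => mul_nonneg (hg0 y) (exp_nonneg _))
    (hg.mul_const K) hball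
  rw [integral_mul_const] at hmass
  nlinarith [sq_nonneg (∫ z, f z ∂(κ x)), exp_nonneg (c * (‖x‖ + r) ^ 2)]

/-- Step (a) in the proof of Theorem 1.1: if `κ` is a Markov kernel with invariant
probability measure `μ` satisfying the Harnack inequality
`(∫ f dκ(x))² ≤ (∫ f² dκ(y)) e^{c ‖x-y‖²}` for bounded measurable `f ≥ 0`, and
`μ({‖·‖ < r}) ≥ 1/2`, then for bounded measurable `f ≥ 0` with `∫ f² dμ ≤ 1`,
`(∫ f dκ(x))² ≤ 2 e^{c (‖x‖ + r)²}` for every `x`. -/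
theorem harnack_pointwise_bound
    {E : Type*} [NormedAddCommGroup E] [NormedSpace ℝ E]
    [MeasurableSpace E] [BorelSpace E]
    (κ : ProbabilityTheory.Kernel E E) [ProbabilityTheory.IsMarkovKernel κ]
    (μ : MeasureTheory.Measure E) [MeasureTheory.IsProbabilityMeasure μ]
    (hinv : ∀ f : E → ℝ, Measurable f → (∃ C, ∀ x, |f x| ≤ C) →
      ∫ x, (∫ y, f y ∂(κ x)) ∂μ = ∫ y, f y ∂μ)
    (c : ℝ) (hc : 0 ≤ c)
    (harnack : ∀ f : E → ℝ, Measurable f → (∃ C, ∀ x, |f x| ≤ C) → (∀ x, 0 ≤ f x) →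
      ∀ x y : E, (∫ z, f z ∂(κ x)) ^ 2 ≤
        (∫ z, (f z) ^ 2 ∂(κ y)) * Real.exp (c * ‖x - y‖ ^ 2))
    (r : ℝ) (hr : 0 < r) (hμr : (1 : ENNReal) / 2 ≤ μ {x : E | ‖x‖ < r}) :
    ∀ f : E → ℝ, Measurable f → (∃ C, ∀ x, |f x| ≤ C) → (∀ x, 0 ≤ f x) →
      (∫ z, (f z) ^ 2 ∂μ) ≤ 1 →
      ∀ x : E, (∫ z, f z ∂(κ x)) ^ 2 ≤ 2 * Real.exp (c * (‖x‖ + r) ^ 2) :=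
  harnack_pointwise_bound_general κ μ hinv c hc harnack r hμr
end

section
/- Let E be a real normed vector space equipped with its Borel σ-algebra, let κ be a Markov kernel from E to E, and let μ be a probability measure on E that is invariant for κ (for every bounded measurable f, ∫_E (∫_E f dκ(x)) μ(dx) = ∫_E f dμ). Assume there is c ≥ 0 such that for every bounded measurable f ≥ 0 and all x, y ∈ E, (∫ f dκ(x))² ≤ (∫ f² dκ(y)) · e^{c‖x − y‖²}, and assume r > 0 satisfies μ({x : ‖x‖ < r}) ≥ 1/2. If moreover E0 := ∫_E e^{2c(‖x‖ + r)²} μ(dx) < ∞, then for every bounded measurable f ≥ 0, ∫_E (∫ f dκ(x))⁴ μ(dx) ≤ 4 E0 · (∫ f² dμ)²; i.e. the Markov operator Pf(x) = ∫ f dκ(x) is bounded from L²(μ) to L⁴(μ) with norm at most (4E0)^{1/4} on nonnegative functions. -/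
open MeasureTheory ProbabilityTheory Real

/-!
For `x` fixed and `y` in the ball `B = {‖y‖ < r}` the Harnack inequality gives
`(Pf x)² ≤ P(f²)(y) e^{c(‖x‖+r)²}`. Averaging over `y ∈ B` and using invariance of `μ`,
`(Pf x)² μ(B) ≤ e^{c(‖x‖+r)²} μ(f²)`, so `(Pf x)⁴ ≤ 4 e^{2c(‖x‖+r)²} μ(f²)²` since `μ(B) ≥ 1/2`;
integrating in `x` gives the bound.
-/

lemma ProbabilityTheory.Kernel.integrable_integral_of_abs_le {α β : Type*} [MeasurableSpace α]
    [MeasurableSpace β] (κ : Kernel α β) [IsMarkovKernel κ] (μ : Measure α) [IsFiniteMeasure μ]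
    {h : β → ℝ} (hh : Measurable h) {D : ℝ} (hD : ∀ z, |h z| ≤ D) :
    Integrable (fun x => ∫ z, h z ∂κ x) μ :=
  .of_bound hh.stronglyMeasurable.integral_kernel.aestronglyMeasurable D <| .of_forall fun x => by
    simpa using norm_integral_le_of_norm_le_const (μ := κ x) (f := h)
      (.of_forall fun z => (Real.norm_eq_abs _).trans_le (hD z))

lemma mul_measureReal_le_integral_of_forall_le {α : Type*} [MeasurableSpace α] {μ : Measure α}
    [IsFiniteMeasure μ] {g : α → ℝ} {s : Set α} {a : ℝ} (hs : MeasurableSet s)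
    (hg : Integrable g μ) (hg0 : 0 ≤ g) (ha : ∀ y ∈ s, a ≤ g y) :
    a * μ.real s ≤ ∫ y, g y ∂μ :=
  (setIntegral_ge_of_const_le_real hs (measure_ne_top μ s) ha hg.integrableOn).trans
    (setIntegral_le_integral hg (.of_forall hg0))

lemma exp_mul_norm_sub_sq_le {E : Type*} [SeminormedAddCommGroup E] {c r : ℝ} (hc : 0 ≤ c)
    (x : E) {y : E} (hy : ‖y‖ < r) :
    exp (c * ‖x - y‖ ^ 2) ≤ exp (c * (‖x‖ + r) ^ 2) := by
  have hxy : ‖x - y‖ ≤ ‖x‖ + r := (norm_sub_le x y).trans (by linarith)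
  gcongr

lemma mul_measureReal_ball_le_of_harnack {E : Type*} [NormedAddCommGroup E] [MeasurableSpace E]
    [OpensMeasurableSpace E] {μ : Measure E} [IsFiniteMeasure μ] {g : E → ℝ}
    (hg : Integrable g μ) (hg0 : 0 ≤ g) {A c : ℝ} (hc : 0 ≤ c) (r : ℝ) (x : E)
    (hA : ∀ y, A ≤ g y * exp (c * ‖x - y‖ ^ 2)) :
    A * μ.real {y | ‖y‖ < r} ≤ exp (c * (‖x‖ + r) ^ 2) * ∫ y, g y ∂μ := by
  set K := exp (c * (‖x‖ + r) ^ 2)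
  have hK : 0 < K := exp_pos _
  have hball : MeasurableSet {y : E | ‖y‖ < r} := measurableSet_lt measurable_norm measurable_const
  have hlow : ∀ y ∈ {y : E | ‖y‖ < r}, A / K ≤ g y := fun y hy => by
    rw [div_le_iff₀ hK]
    exact (hA y).trans (mul_le_mul_of_nonneg_left (exp_mul_norm_sub_sq_le hc x hy) (hg0 y))
  calc A * μ.real {y | ‖y‖ < r} = K * (A / K * μ.real {y | ‖y‖ < r}) := by field_simp
    _ ≤ K * ∫ y, g y ∂μ :=
      mul_le_mul_of_nonneg_left (mul_measureReal_le_integral_of_forall_le hball hg hg0 hlow) hK.le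

theorem harnack_hyperboundedness_general
    {E : Type*} [NormedAddCommGroup E]
    [MeasurableSpace E] [BorelSpace E]
    (κ : ProbabilityTheory.Kernel E E) [ProbabilityTheory.IsMarkovKernel κ]
    (μ : MeasureTheory.Measure E) [MeasureTheory.IsProbabilityMeasure μ]
    (hinv : ∀ f : E → ℝ, Measurable f → (∃ C, ∀ x, |f x| ≤ C) →
      ∫ x, (∫ y, f y ∂(κ x)) ∂μ = ∫ y, f y ∂μ)
    (c : ℝ) (hc : 0 ≤ c)
    (harnack : ∀ f : E → ℝ, Measurable f → (∃ C, ∀ x, |f x| ≤ C) → (∀ x, 0 ≤ f x) →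
      ∀ x y : E, (∫ z, f z ∂(κ x)) ^ 2 ≤
        (∫ z, (f z) ^ 2 ∂(κ y)) * Real.exp (c * ‖x - y‖ ^ 2))
    (r : ℝ) (hμr : (1 : ENNReal) / 2 ≤ μ {x : E | ‖x‖ < r})
    (hE0 : MeasureTheory.Integrable (fun x => Real.exp (2 * c * (‖x‖ + r) ^ 2)) μ) :
    ∀ f : E → ℝ, Measurable f → (∃ C, ∀ x, |f x| ≤ C) → (∀ x, 0 ≤ f x) →
      ∫ x, (∫ z, f z ∂(κ x)) ^ 4 ∂μ ≤
        4 * (∫ x, Real.exp (2 * c * (‖x‖ + r) ^ 2) ∂μ) * (∫ z, (f z) ^ 2 ∂μ) ^ 2 := by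
  intro f hf ⟨C, hC⟩ hf0
  set I := ∫ z, f z ^ 2 ∂μ
  have hf2 : ∀ z, |f z ^ 2| ≤ C ^ 2 := fun z => by
    rw [abs_pow]; exact pow_le_pow_left₀ (abs_nonneg _) (hC z) 2
  have hPf2 : ∫ x, (∫ z, f z ^ 2 ∂κ x) ∂μ = I := hinv _ (hf.pow_const 2) ⟨C ^ 2, hf2⟩
  have hball : (1 / 2 : ℝ) ≤ μ.real {x | ‖x‖ < r} := by
    simpa [measureReal_def] using ENNReal.toReal_mono (measure_ne_top μ _) hμr
  have hsq : ∀ x, (∫ z, f z ∂κ x) ^ 2 ≤ 2 * exp (c * (‖x‖ + r) ^ 2) * I := fun x => by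
    have := mul_measureReal_ball_le_of_harnack
      (κ.integrable_integral_of_abs_le μ (hf.pow_const 2) hf2)
      (fun y => integral_nonneg fun z => sq_nonneg (f z)) hc r x (harnack f hf ⟨C, hC⟩ hf0 x)
    rw [hPf2] at this
    nlinarith [sq_nonneg (∫ z, f z ∂κ x)]
  have hfourth : ∀ x, (∫ z, f z ∂κ x) ^ 4 ≤ 4 * exp (2 * c * (‖x‖ + r) ^ 2) * I ^ 2 := fun x => by
    calc (∫ z, f z ∂κ x) ^ 4 = ((∫ z, f z ∂κ x) ^ 2) ^ 2 := by ring
      _ ≤ (2 * exp (c * (‖x‖ + r) ^ 2) * I) ^ 2 := pow_le_pow_left₀ (sq_nonneg _) (hsq x) 2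
      _ = 4 * exp (2 * c * (‖x‖ + r) ^ 2) * I ^ 2 := by
        rw [mul_assoc 2 c, two_mul (c * _), exp_add]; ring
  calc ∫ x, (∫ z, f z ∂κ x) ^ 4 ∂μ ≤ ∫ x, 4 * exp (2 * c * (‖x‖ + r) ^ 2) * I ^ 2 ∂μ :=
        integral_mono_of_nonneg (.of_forall fun x => by positivity)
          ((hE0.const_mul 4).mul_const _) (.of_forall hfourth)
    _ = 4 * (∫ x, exp (2 * c * (‖x‖ + r) ^ 2) ∂μ) * I ^ 2 := by
        rw [integral_mul_const, integral_const_mul]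

/-- Hyperboundedness conclusion of step (a) in the proof of Theorem 1.1: under the
Harnack inequality and invariance of `μ`, if `E0 = ∫ e^{2c(‖x‖+r)²} μ(dx) < ∞` then
`∫ (∫ f dκ(x))⁴ μ(dx) ≤ 4 E0 (∫ f² dμ)²` for every bounded measurable `f ≥ 0`. -/
theorem harnack_hyperboundedness
    {E : Type*} [NormedAddCommGroup E] [NormedSpace ℝ E]
    [MeasurableSpace E] [BorelSpace E]
    (κ : ProbabilityTheory.Kernel E E) [ProbabilityTheory.IsMarkovKernel κ]
    (μ : MeasureTheory.Measure E) [MeasureTheory.IsProbabilityMeasure μ]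
    (hinv : ∀ f : E → ℝ, Measurable f → (∃ C, ∀ x, |f x| ≤ C) →
      ∫ x, (∫ y, f y ∂(κ x)) ∂μ = ∫ y, f y ∂μ)
    (c : ℝ) (hc : 0 ≤ c)
    (harnack : ∀ f : E → ℝ, Measurable f → (∃ C, ∀ x, |f x| ≤ C) → (∀ x, 0 ≤ f x) →
      ∀ x y : E, (∫ z, f z ∂(κ x)) ^ 2 ≤
        (∫ z, (f z) ^ 2 ∂(κ y)) * Real.exp (c * ‖x - y‖ ^ 2))
    (r : ℝ) (hr : 0 < r) (hμr : (1 : ENNReal) / 2 ≤ μ {x : E | ‖x‖ < r})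
    (hE0 : MeasureTheory.Integrable (fun x => Real.exp (2 * c * (‖x‖ + r) ^ 2)) μ) :
    ∀ f : E → ℝ, Measurable f → (∃ C, ∀ x, |f x| ≤ C) → (∀ x, 0 ≤ f x) →
      ∫ x, (∫ z, f z ∂(κ x)) ^ 4 ∂μ ≤
        4 * (∫ x, Real.exp (2 * c * (‖x‖ + r) ^ 2) ∂μ) * (∫ z, (f z) ^ 2 ∂μ) ^ 2 :=
  harnack_hyperboundedness_general κ μ hinv c hc harnack r hμr hE0
end

section
/- Let k1 > 0 and r0 > 0 be real numbers, set u := √(k1² r0² + 1) and s0 := (k1 r0 − 1 + u)/r0. Then s0 ∈ (0, 2k1), and the supremum over s ∈ (0, 2k1) of s(2k1 − s) e^{−r0(2k1 − s)} is attained at s = s0 and equals (2(u − 1)/r0²) · exp(u − 1 − k1 r0). -/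
open Real Set

/-- The optimization in the proof of Corollary 1.2: with `u = √(k1² r0² + 1)` and
`s0 = (k1 r0 - 1 + u)/r0`, the point `s0` lies in `(0, 2k1)` and the function
`s ↦ s (2k1 - s) e^{-r0 (2k1 - s)}` attains its supremum over `(0, 2k1)` at `s0`,
with value `(2(u-1)/r0²) exp(u - 1 - k1 r0)`. -/
theorem corollary12_optimization (k1 r0 : ℝ) (hk1 : 0 < k1) (hr0 : 0 < r0) :
    (k1 * r0 - 1 + Real.sqrt (k1 ^ 2 * r0 ^ 2 + 1)) / r0 ∈
      Set.Ioo (0 : ℝ) (2 * k1) ∧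
    (∀ s ∈ Set.Ioo (0 : ℝ) (2 * k1),
      s * (2 * k1 - s) * Real.exp (-r0 * (2 * k1 - s)) ≤
        (2 * (Real.sqrt (k1 ^ 2 * r0 ^ 2 + 1) - 1) / r0 ^ 2) *
          Real.exp (Real.sqrt (k1 ^ 2 * r0 ^ 2 + 1) - 1 - k1 * r0)) ∧
    ((k1 * r0 - 1 + Real.sqrt (k1 ^ 2 * r0 ^ 2 + 1)) / r0) *
        (2 * k1 - (k1 * r0 - 1 + Real.sqrt (k1 ^ 2 * r0 ^ 2 + 1)) / r0) *
        Real.exp (-r0 * (2 * k1 - (k1 * r0 - 1 + Real.sqrt (k1 ^ 2 * r0 ^ 2 + 1)) / r0)) =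
      (2 * (Real.sqrt (k1 ^ 2 * r0 ^ 2 + 1) - 1) / r0 ^ 2) *
        Real.exp (Real.sqrt (k1 ^ 2 * r0 ^ 2 + 1) - 1 - k1 * r0) := by
  have hu0 : (0:ℝ) ≤ k1 ^ 2 * r0 ^ 2 + 1 := by positivity
  set u := Real.sqrt (k1 ^ 2 * r0 ^ 2 + 1) with hu
  have hu2 : u ^ 2 = k1 ^ 2 * r0 ^ 2 + 1 := Real.sq_sqrt hu0
  have hun : 0 ≤ u := Real.sqrt_nonneg _
  have hkr : 0 < k1 * r0 := mul_pos hk1 hr0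
  have hu1 : 1 < u := by nlinarith
  set s0 := (k1 * r0 - 1 + u) / r0 with hs0
  have hs0pos : 0 < s0 := div_pos (by nlinarith) hr0
  have hs0lt : s0 < 2 * k1 := by rw [hs0, div_lt_iff₀ hr0]; nlinarith
  have hA : 0 < 2 * (u - 1) / r0 ^ 2 := div_pos (by linarith) (by positivity)
  have harg : u - 1 - k1 * r0 = -r0 * (2 * k1 - s0) := by
    rw [hs0]; field_simp; ring
  have hprod : s0 * (2 * k1 - s0) = 2 * (u - 1) / r0 ^ 2 := by
    rw [hs0]; field_simp; nlinarith [hu2]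
  refine ⟨⟨hs0pos, hs0lt⟩, ?_, ?_⟩
  · intro s hs
    have key : s * (2 * k1 - s) ≤ (2 * (u - 1) / r0 ^ 2) * Real.exp (r0 * (s0 - s)) := by
      have h1 : (2 * (u - 1) / r0 ^ 2) * (1 + r0 * (s0 - s)) - s * (2 * k1 - s)
          = (s - s0) ^ 2 := by
        rw [hs0]; field_simp; nlinarith [hu2]
      have h2 : 1 + r0 * (s0 - s) ≤ Real.exp (r0 * (s0 - s)) := by
        have := Real.add_one_le_exp (r0 * (s0 - s)); linarith
      nlinarith [sq_nonneg (s - s0)]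
    have hexp : Real.exp (u - 1 - k1 * r0)
        = Real.exp (-r0 * (2 * k1 - s)) * Real.exp (r0 * (s0 - s)) := by
      rw [← Real.exp_add]; congr 1; rw [hs0]; field_simp; ring
    calc s * (2 * k1 - s) * Real.exp (-r0 * (2 * k1 - s))
        ≤ ((2 * (u - 1) / r0 ^ 2) * Real.exp (r0 * (s0 - s))) *
            Real.exp (-r0 * (2 * k1 - s)) :=
          mul_le_mul_of_nonneg_right key (Real.exp_nonneg _)
      _ = (2 * (u - 1) / r0 ^ 2) * Real.exp (u - 1 - k1 * r0) := by rw [hexp]; ring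
  · rw [hprod, harg]
end

section
/- Let k1 > 0, r0 > 0 and k2 ≥ 0 be real numbers, set u := √(k1² r0² + 1) and s0 := (k1 r0 − 1 + u)/r0. Then (2k1 − s0) − (k2²/s0) e^{r0(2k1 − s0)} = (r0/(k1 r0 − 1 + u)) · (2(u − 1)/r0² − k2² · exp(1 + k1 r0 − u)). In particular this quantity is strictly positive if and only if k2² < (2(u − 1)/r0²) · exp(u − 1 − k1 r0). -/
open Real

/-! With `c = k1 r0` and `u = √(c² + 1)`, the point `s0 = (c - 1 + u)/r0` satisfies
`r0 (2k1 - s0) = c + 1 - u` and, since `(c + 1 - u)(c - 1 + u) = c² - (u - 1)² = 2(u - 1)`,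
also `s0 (2k1 - s0) = 2(u - 1)/r0²`. Factoring `1/s0 = r0/(c - 1 + u) > 0` out of
`(2k1 - s0) - (k2²/s0) e^{r0(2k1 - s0)}` gives the identity, and the sign of the rate is the sign
of the second factor. -/

section Rate

variable {k1 r0 u : ℝ}

lemma sub_one_add_pos_of_sq_eq_sq_add_one {c : ℝ} (hc : 0 < c) (hu0 : 0 ≤ u)
    (hu : u ^ 2 = c ^ 2 + 1) : 0 < c - 1 + u := by
  nlinarith

lemma mul_two_mul_sub_root (hr0 : r0 ≠ 0) :
    r0 * (2 * k1 - (k1 * r0 - 1 + u) / r0) = 1 + k1 * r0 - u := by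
  field_simp
  ring

lemma root_mul_two_mul_sub_root (hr0 : r0 ≠ 0) (hu : u ^ 2 = (k1 * r0) ^ 2 + 1) :
    (k1 * r0 - 1 + u) / r0 * (2 * k1 - (k1 * r0 - 1 + u) / r0) = 2 * (u - 1) / r0 ^ 2 := by
  field_simp
  linear_combination -hu

lemma rate_eq (k2 : ℝ) (hr0 : r0 ≠ 0) (hD : k1 * r0 - 1 + u ≠ 0)
    (hu : u ^ 2 = (k1 * r0) ^ 2 + 1) :
    (2 * k1 - (k1 * r0 - 1 + u) / r0) -
        k2 ^ 2 / ((k1 * r0 - 1 + u) / r0) * exp (r0 * (2 * k1 - (k1 * r0 - 1 + u) / r0)) =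
      r0 / (k1 * r0 - 1 + u) * (2 * (u - 1) / r0 ^ 2 - k2 ^ 2 * exp (1 + k1 * r0 - u)) := by
  rw [mul_two_mul_sub_root hr0, ← root_mul_two_mul_sub_root hr0 hu]
  field_simp

lemma rate_pos_iff (k2 : ℝ) (hr0 : 0 < r0) (hD : 0 < k1 * r0 - 1 + u)
    (hu : u ^ 2 = (k1 * r0) ^ 2 + 1) :
    0 < (2 * k1 - (k1 * r0 - 1 + u) / r0) -
        k2 ^ 2 / ((k1 * r0 - 1 + u) / r0) * exp (r0 * (2 * k1 - (k1 * r0 - 1 + u) / r0)) ↔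
      k2 ^ 2 < 2 * (u - 1) / r0 ^ 2 * exp (u - 1 - k1 * r0) := by
  rw [rate_eq k2 hr0.ne' hD.ne' hu, mul_pos_iff_of_pos_left (div_pos hr0 hD), sub_pos,
    ← lt_div_iff₀ (exp_pos _), div_eq_mul_inv, ← exp_neg, neg_sub', sub_neg_eq_add]
  ring_nf

end Rate

theorem corollary12_rate_identity_general (k1 r0 k2 : ℝ) (hk1 : 0 < k1) (hr0 : 0 < r0) :
    ((2 * k1 - (k1 * r0 - 1 + Real.sqrt (k1 ^ 2 * r0 ^ 2 + 1)) / r0) -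
        (k2 ^ 2 / ((k1 * r0 - 1 + Real.sqrt (k1 ^ 2 * r0 ^ 2 + 1)) / r0)) *
          Real.exp (r0 * (2 * k1 - (k1 * r0 - 1 + Real.sqrt (k1 ^ 2 * r0 ^ 2 + 1)) / r0)) =
      (r0 / (k1 * r0 - 1 + Real.sqrt (k1 ^ 2 * r0 ^ 2 + 1))) *
        (2 * (Real.sqrt (k1 ^ 2 * r0 ^ 2 + 1) - 1) / r0 ^ 2 -
          k2 ^ 2 * Real.exp (1 + k1 * r0 - Real.sqrt (k1 ^ 2 * r0 ^ 2 + 1)))) ∧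
    (0 < (2 * k1 - (k1 * r0 - 1 + Real.sqrt (k1 ^ 2 * r0 ^ 2 + 1)) / r0) -
        (k2 ^ 2 / ((k1 * r0 - 1 + Real.sqrt (k1 ^ 2 * r0 ^ 2 + 1)) / r0)) *
          Real.exp (r0 * (2 * k1 - (k1 * r0 - 1 + Real.sqrt (k1 ^ 2 * r0 ^ 2 + 1)) / r0)) ↔
      k2 ^ 2 < (2 * (Real.sqrt (k1 ^ 2 * r0 ^ 2 + 1) - 1) / r0 ^ 2) *
        Real.exp (Real.sqrt (k1 ^ 2 * r0 ^ 2 + 1) - 1 - k1 * r0)) := by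
  have hu : √(k1 ^ 2 * r0 ^ 2 + 1) ^ 2 = (k1 * r0) ^ 2 + 1 := by
    rw [sq_sqrt (by positivity), mul_pow]
  have hD := sub_one_add_pos_of_sq_eq_sq_add_one (mul_pos hk1 hr0) (sqrt_nonneg _) hu
  exact ⟨rate_eq k2 hr0.ne' hD.ne' hu, rate_pos_iff k2 hr0 hD hu⟩

/-- The identity for the exponential rate `λ` in Corollary 1.2: with
`u = √(k1² r0² + 1)` and `s0 = (k1 r0 - 1 + u)/r0`,
`(2k1 - s0) - (k2²/s0) e^{r0 (2k1 - s0)}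
  = (r0/(k1 r0 - 1 + u)) (2(u-1)/r0² - k2² exp(1 + k1 r0 - u))`,
and it is strictly positive iff `k2² < (2(u-1)/r0²) exp(u - 1 - k1 r0)`. -/
theorem corollary12_rate_identity (k1 r0 k2 : ℝ) (hk1 : 0 < k1) (hr0 : 0 < r0)
    (hk2 : 0 ≤ k2) :
    ((2 * k1 - (k1 * r0 - 1 + Real.sqrt (k1 ^ 2 * r0 ^ 2 + 1)) / r0) -
        (k2 ^ 2 / ((k1 * r0 - 1 + Real.sqrt (k1 ^ 2 * r0 ^ 2 + 1)) / r0)) *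
          Real.exp (r0 * (2 * k1 - (k1 * r0 - 1 + Real.sqrt (k1 ^ 2 * r0 ^ 2 + 1)) / r0)) =
      (r0 / (k1 * r0 - 1 + Real.sqrt (k1 ^ 2 * r0 ^ 2 + 1))) *
        (2 * (Real.sqrt (k1 ^ 2 * r0 ^ 2 + 1) - 1) / r0 ^ 2 -
          k2 ^ 2 * Real.exp (1 + k1 * r0 - Real.sqrt (k1 ^ 2 * r0 ^ 2 + 1)))) ∧
    (0 < (2 * k1 - (k1 * r0 - 1 + Real.sqrt (k1 ^ 2 * r0 ^ 2 + 1)) / r0) -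
        (k2 ^ 2 / ((k1 * r0 - 1 + Real.sqrt (k1 ^ 2 * r0 ^ 2 + 1)) / r0)) *
          Real.exp (r0 * (2 * k1 - (k1 * r0 - 1 + Real.sqrt (k1 ^ 2 * r0 ^ 2 + 1)) / r0)) ↔
      k2 ^ 2 < (2 * (Real.sqrt (k1 ^ 2 * r0 ^ 2 + 1) - 1) / r0 ^ 2) *
        Real.exp (Real.sqrt (k1 ^ 2 * r0 ^ 2 + 1) - 1 - k1 * r0)) :=
  corollary12_rate_identity_general k1 r0 k2 hk1 hr0
end
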